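/- Let S be a race-free occurrence net with polarized events and let S′ = S ⋈_f be obtained from S by a drop-preserving join determined by a maximal negative conflict cluster N, a strictly positive cluster P (possibly contained in a larger maximal cluster ℙ of events of polarity 0 or ⊕) and a bijection f : N → P. Then S′ is race-free. -/

import Mathlib

open scoped Classical ComplexOrder

set_option linter.unusedSectionVars false
set_option maxHeartbeats 1000000

noncomputable section

namespace QPN




/-- Polarities of events: `neg` (environment/Opponent), `zero` (internal), `pos` (program/Player). -/
inductive Pol where
  | neg | zero | pos
deriving DecidableEq

/-- A Petri-net skeleton with polarized transitions, given by pre- and post-places of every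
transition, an initial marking, and a polarity for each transition. -/
structure Net (P E : Type) where
  pre : E → Finset P
  post : E → Finset P
  init : Finset P
  pol : E → Pol

variable {P E : Type} [DecidableEq P] [DecidableEq E]

namespace Net

variable (N : Net P E)

/-- Immediate causal flow between events: a post-condition of `e` is a pre-condition of `e'`. -/
def flows (e e' : E) : Prop := (N.post e ∩ N.pre e').Nonempty

/-- Causality: the reflexive-transitive closure of the flow relation, on events. -/
def causes (e e' : E) : Prop := Relation.ReflTransGen N.flows e e'

/-- Conflict between events: `x # x'` iff there are distinct events `e ≠ e'` with a common
pre-condition, `e ≤ x` and `e' ≤ x'`. -/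
def conflict (x y : E) : Prop :=
  ∃ e e', e ≠ e' ∧ (N.pre e ∩ N.pre e').Nonempty ∧ N.causes e x ∧ N.causes e' y

/-- Minimal conflict `a ~ b`. -/
def minConflict (a b : E) : Prop :=
  N.conflict a b ∧ (∀ a', N.causes a' a → a' ≠ a → ¬ N.conflict a' b) ∧
    (∀ b', N.causes b' b → b' ≠ b → ¬ N.conflict a b')

/-- Race-freeness: in a minimal conflict, either both events are negative or neither is. -/
def RaceFree : Prop :=
  ∀ a b, N.minConflict a b → (N.pol a = Pol.neg ↔ N.pol b = Pol.neg)

/-- The axioms making a (safe) polarized net an occurrence net. -/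
structure IsOccurrenceNet : Prop where
  causality_antisymm : ∀ e e', N.causes e e' → N.causes e' e → e = e'
  finite_cones : ∀ e, {e' | N.causes e' e}.Finite
  no_self_conflict : ∀ e, ¬ N.conflict e e
  unique_pre : ∀ c e e', c ∈ N.post e → c ∈ N.post e' → e = e'
  init_minimal : ∀ c, c ∈ N.init ↔ ∀ e, c ∉ N.post e

/-- Configurations: finite, down-closed and conflict-free sets of events. -/
def IsConfig (x : Finset E) : Prop :=
  (∀ e ∈ x, ∀ e', N.causes e' e → e' ∈ x) ∧ ∀ e ∈ x, ∀ e' ∈ x, ¬ N.conflict e e'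

/-- A configuration `x` enables an event `e`, written `x ⊢ e`. -/
def Enables (x : Finset E) (e : E) : Prop := e ∉ x ∧ N.IsConfig (insert e x)

/-- The marking (cut) `x̂` associated to a configuration `x`: the conditions holding after
firing exactly the events of `x`. -/
def markingOf (x : Finset E) : Finset P :=
  (N.init ∪ x.biUnion N.post) \ x.biUnion N.pre

/-- Result of firing transition `e` from marking `m`. -/
def fire (m : Finset P) (e : E) : Finset P := (m \ N.pre e) ∪ N.post e

/-- Firing sequences of transitions between markings. -/
inductive FireSeq : Finset P → List E → Finset P → Prop
  | nil (m : Finset P) : FireSeq m [] m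
  | cons {m m' : Finset P} {e : E} {L : List E} :
      N.pre e ⊆ m → FireSeq (N.fire m e) L m' → FireSeq m (e :: L) m'

/-- Reachability `m →* m'`. -/
def Reach (m m' : Finset P) : Prop := ∃ L, N.FireSeq m L m'

/-- The marking obtained after firing the list `L` from `m`. -/
def markAfter : Finset P → List E → Finset P
  | m, [] => m
  | m, e :: L => markAfter (N.fire m e) L

/-- `{e}^⊖` : the singleton `{e}` if `e` is negative, `∅` otherwise. -/
def negPart (e : E) : Finset E := if N.pol e = Pol.neg then {e} else ∅
/-- `{e}^⊕` : the singleton `{e}` if `e` is positive, `∅` otherwise. -/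
def posPart (e : E) : Finset E := if N.pol e = Pol.pos then {e} else ∅
/-- The negative events of a finite set of events. -/
def negs (t : Finset E) : Finset E := t.filter fun e => N.pol e = Pol.neg
/-- The positive events of a finite set of events. -/
def poss (t : Finset E) : Finset E := t.filter fun e => N.pol e = Pol.pos

/-- The set `σ[m;m']` of events fired from `m` to `m'` (chosen via some firing sequence;
in an occurrence net it does not depend on the choice). -/
def sigma (m m' : Finset P) : Finset E :=
  if h : ∃ L, N.FireSeq m L m' then h.choose.toFinset else ∅

theorem markAfter_eq {m m' : Finset P} {L : List E} (h : N.FireSeq m L m') :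
    N.markAfter m L = m' := by
  induction h with
  | nil => rfl
  | cons _ _ ih => exact ih

end Net






/-- Linear maps between matrix algebras (super-operators). -/
abbrev MatMap (α β : Type) := Matrix α α ℂ →ₗ[ℂ] Matrix β β ℂ

/-- The trace, as a linear functional. -/
def trFun (α : Type) [Fintype α] : Matrix α α ℂ →ₗ[ℂ] ℂ := Matrix.traceLinearMap α ℂ ℂ

/-- Transport of a super-operator along an equality of index types. -/
def castMap {α β : Type} (h : α = β) : MatMap α β := by subst h; exact LinearMap.id

/-- Conjugation of a super-operator by bijections of the index types. -/
def conjMap {α α' β β' : Type} (eIn : α ≃ α') (eOut : β ≃ β') (Φ : MatMap α β) : MatMap α' β' :=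
  (Matrix.reindexLinearEquiv ℂ ℂ eOut eOut).toLinearMap ∘ₗ Φ ∘ₗ
    (Matrix.reindexLinearEquiv ℂ ℂ eIn.symm eIn.symm).toLinearMap

/-- `Φ ⊗ Id` : tensoring a super-operator with the identity on a further factor (on the right). -/
def tensorIdRight {α β γ : Type} (Φ : MatMap α β) : MatMap (α × γ) (β × γ) where
  toFun ρ := Matrix.of fun pq p'q' =>
    Φ (Matrix.of fun a a' => ρ (a, pq.2) (a', p'q'.2)) pq.1 p'q'.1
  map_add' ρ σ := by
    ext pq p'q'
    show Φ (Matrix.of fun a a' => (ρ + σ) (a, pq.2) (a', p'q'.2)) pq.1 p'q'.1 =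
      Φ (Matrix.of fun a a' => ρ (a, pq.2) (a', p'q'.2)) pq.1 p'q'.1 +
        Φ (Matrix.of fun a a' => σ (a, pq.2) (a', p'q'.2)) pq.1 p'q'.1
    rw [show (Matrix.of fun a a' => (ρ + σ) (a, pq.2) (a', p'q'.2)) =
        (Matrix.of fun a a' => ρ (a, pq.2) (a', p'q'.2)) +
          (Matrix.of fun a a' => σ (a, pq.2) (a', p'q'.2)) from rfl, map_add]
    rfl
  map_smul' c ρ := by
    ext pq p'q'
    show Φ (Matrix.of fun a a' => (c • ρ) (a, pq.2) (a', p'q'.2)) pq.1 p'q'.1 = _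
    rw [show (Matrix.of fun a a' => (c • ρ) (a, pq.2) (a', p'q'.2)) =
        c • (Matrix.of fun a a' => ρ (a, pq.2) (a', p'q'.2)) from rfl, map_smul]
    rfl

/-- `Id ⊗ Φ` : tensoring a super-operator with the identity on a further factor (on the left). -/
def tensorIdLeft {α β γ : Type} (Φ : MatMap α β) : MatMap (γ × α) (γ × β) where
  toFun ρ := Matrix.of fun pq p'q' =>
    Φ (Matrix.of fun a a' => ρ (pq.1, a) (p'q'.1, a')) pq.2 p'q'.2
  map_add' ρ σ := by
    ext pq p'q'
    show Φ (Matrix.of fun a a' => (ρ + σ) (pq.1, a) (p'q'.1, a')) pq.2 p'q'.2 =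
      Φ (Matrix.of fun a a' => ρ (pq.1, a) (p'q'.1, a')) pq.2 p'q'.2 +
        Φ (Matrix.of fun a a' => σ (pq.1, a) (p'q'.1, a')) pq.2 p'q'.2
    rw [show (Matrix.of fun a a' => (ρ + σ) (pq.1, a) (p'q'.1, a')) =
        (Matrix.of fun a a' => ρ (pq.1, a) (p'q'.1, a')) +
          (Matrix.of fun a a' => σ (pq.1, a) (p'q'.1, a')) from rfl, map_add]
    rfl
  map_smul' c ρ := by
    ext pq p'q'
    show Φ (Matrix.of fun a a' => (c • ρ) (pq.1, a) (p'q'.1, a')) pq.2 p'q'.2 = _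
    rw [show (Matrix.of fun a a' => (c • ρ) (pq.1, a) (p'q'.1, a')) =
        c • (Matrix.of fun a a' => ρ (pq.1, a) (p'q'.1, a')) from rfl, map_smul]
    rfl

/-- `d ⊗ tr` : a linear functional `d` on the first tensor factor, tensored with the trace on
the second factor (i.e. `d` applied after partially tracing out the second factor). -/
def trSnd {α β : Type} [Fintype β] (d : Matrix α α ℂ →ₗ[ℂ] ℂ) :
    Matrix (α × β) (α × β) ℂ →ₗ[ℂ] ℂ where
  toFun ρ := d (Matrix.of fun a a' => ∑ b : β, ρ (a, b) (a', b))
  map_add' ρ σ := by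
    have h : (Matrix.of fun a a' => ∑ b : β, (ρ + σ) (a, b) (a', b)) =
        (Matrix.of fun a a' => ∑ b : β, ρ (a, b) (a', b)) +
          (Matrix.of fun a a' => ∑ b : β, σ (a, b) (a', b)) := by
      ext a a'; simp [Finset.sum_add_distrib]
    show d (Matrix.of fun a a' => ∑ b : β, (ρ + σ) (a, b) (a', b)) = _
    rw [h, map_add]
  map_smul' c ρ := by
    have h : (Matrix.of fun a a' => ∑ b : β, (c • ρ) (a, b) (a', b)) =
        c • (Matrix.of fun a a' => ∑ b : β, ρ (a, b) (a', b)) := by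
      ext a a'; simp [Finset.mul_sum]
    show d (Matrix.of fun a a' => ∑ b : β, (c • ρ) (a, b) (a', b)) = _
    rw [h, map_smul]
    rfl

/-- Tensor product of two linear functionals on matrix algebras. -/
def funTens {α β : Type} (d : Matrix α α ℂ →ₗ[ℂ] ℂ) (d' : Matrix β β ℂ →ₗ[ℂ] ℂ) :
    Matrix (α × β) (α × β) ℂ →ₗ[ℂ] ℂ where
  toFun ρ := d' (Matrix.of fun b b' => d (Matrix.of fun a a' => ρ (a, b) (a', b')))
  map_add' ρ σ := by
    have h : (Matrix.of fun b b' => d (Matrix.of fun a a' => (ρ + σ) (a, b) (a', b'))) =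
        (Matrix.of fun b b' => d (Matrix.of fun a a' => ρ (a, b) (a', b'))) +
          (Matrix.of fun b b' => d (Matrix.of fun a a' => σ (a, b) (a', b'))) := by
      ext b b'
      show d (Matrix.of fun a a' => (ρ + σ) (a, b) (a', b')) = _
      rw [show (Matrix.of fun a a' => (ρ + σ) (a, b) (a', b')) =
          (Matrix.of fun a a' => ρ (a, b) (a', b')) +
            (Matrix.of fun a a' => σ (a, b) (a', b')) from rfl, map_add]
      rfl
    show d' (Matrix.of fun b b' => d (Matrix.of fun a a' => (ρ + σ) (a, b) (a', b'))) = _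
    rw [h, map_add]
  map_smul' c ρ := by
    have h : (Matrix.of fun b b' => d (Matrix.of fun a a' => (c • ρ) (a, b) (a', b'))) =
        c • (Matrix.of fun b b' => d (Matrix.of fun a a' => ρ (a, b) (a', b'))) := by
      ext b b'
      show d (Matrix.of fun a a' => (c • ρ) (a, b) (a', b')) = _
      rw [show (Matrix.of fun a a' => (c • ρ) (a, b) (a', b')) =
          c • (Matrix.of fun a a' => ρ (a, b) (a', b')) from rfl, map_smul]
      rfl
    show d' (Matrix.of fun b b' => d (Matrix.of fun a a' => (c • ρ) (a, b) (a', b'))) = _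
    rw [h, map_smul]
    rfl

/-- A super-operator is CPTNI if it is hermitian-preserving, completely positive and trace
non-increasing. -/
structure IsCPTNI {α β : Type} [Fintype α] [Fintype β] (Φ : MatMap α β) : Prop where
  herm : ∀ ρ : Matrix α α ℂ, ρ.IsHermitian → (Φ ρ).IsHermitian
  cp : ∀ (n : ℕ) (ρ : Matrix (α × Fin n) (α × Fin n) ℂ), ρ.PosSemidef →
    (tensorIdRight Φ ρ).PosSemidef
  tni : ∀ ρ : Matrix α α ℂ, ρ.PosSemidef → ((Φ ρ).trace).re ≤ (ρ.trace).re

/-- A linear functional on a matrix algebra is nonnegative (`d ⊒ 0`) if it sends every positive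
semidefinite matrix to a nonnegative real. -/
def FunNonneg {α : Type} [Fintype α] (d : Matrix α α ℂ →ₗ[ℂ] ℂ) : Prop :=
  ∀ ρ : Matrix α α ℂ, ρ.PosSemidef → ∃ r : ℝ, 0 ≤ r ∧ d ρ = (r : ℂ)


/-- Dependent tensor-index over a finite set: one index coordinate per element. -/
abbrev PiF {α : Type} (f : α → Type) (s : Finset α) : Type := (a : s) → f ↑a

/-- Splitting a tensor index over a disjoint union. -/
def piFUnion {α : Type} [DecidableEq α] (f : α → Type) (s t : Finset α) (hst : Disjoint s t) :
    PiF f (s ∪ t) ≃ PiF f s × PiF f t where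
  toFun g := (fun a => g ⟨a.1, Finset.mem_union_left _ a.2⟩,
              fun a => g ⟨a.1, Finset.mem_union_right _ a.2⟩)
  invFun p a :=
    if h : a.1 ∈ s then p.1 ⟨a.1, h⟩
    else p.2 ⟨a.1, (Finset.mem_union.mp a.2).resolve_left h⟩
  left_inv g := by
    funext a
    by_cases h : a.1 ∈ s
    · simp [h]
    · simp [h]
  right_inv p := by
    refine Prod.ext ?_ ?_
    · funext a
      simp [a.2]
    · funext a
      have h : a.1 ∉ s := Finset.disjoint_right.mp hst a.2
      simp [h]

/-- The tensor index over a singleton. -/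
def piFSingleton {α : Type} [DecidableEq α] (f : α → Type) (a : α) :
    PiF f ({a} : Finset α) ≃ f a where
  toFun g := g ⟨a, Finset.mem_singleton_self a⟩
  invFun v b := cast (congrArg f (Finset.mem_singleton.mp b.2).symm) v
  left_inv g := by
    funext b
    obtain ⟨b, hb⟩ := b
    obtain rfl := Finset.mem_singleton.mp hb
    rfl
  right_inv v := rfl

/-- The tensor index over the empty set. -/
def piFEmpty {α : Type} (f : α → Type) : PiF f (∅ : Finset α) ≃ PUnit.{1} where
  toFun _ := PUnit.unit
  invFun _ b := absurd b.2 (Finset.notMem_empty _)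
  left_inv g := by
    funext b
    exact absurd b.2 (Finset.notMem_empty _)
  right_inv u := rfl

variable {P E : Type} [DecidableEq P] [DecidableEq E]

/-- The index of the space `Q₀(s) ⊗ H(t)` for a finite set `s` of places and `t` of
transitions. -/
abbrev SIdx (Q : P → Type) (H : E → Type) (s : Finset P) (t : Finset E) : Type :=
  PiF Q s × PiF H t

/-- Splitting `Q₀(s₁ ∪ s₂) ⊗ H(t₁ ∪ t₂)` into `(Q₀(s₁) ⊗ H(t₁)) ⊗ (Q₀(s₂) ⊗ H(t₂))`. -/
def sidxSplit (Q : P → Type) (H : E → Type) (s₁ s₂ : Finset P) (t₁ t₂ : Finset E)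
    (hs : Disjoint s₁ s₂) (ht : Disjoint t₁ t₂) :
    SIdx Q H (s₁ ∪ s₂) (t₁ ∪ t₂) ≃ SIdx Q H s₁ t₁ × SIdx Q H s₂ t₂ :=
  (Equiv.prodCongr (piFUnion Q s₁ s₂ hs) (piFUnion H t₁ t₂ ht)).trans
    (Equiv.prodProdProdComm _ _ _ _)

/-- Merging an extra `H`-factor into the second component. -/
def sidxAbsorb (Q : P → Type) (H : E → Type) (s : Finset P) (t u : Finset E)
    (h : Disjoint t u) :
    SIdx Q H s t × PiF H u ≃ SIdx Q H s (t ∪ u) :=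
  (Equiv.prodAssoc _ _ _).trans (Equiv.prodCongr (Equiv.refl _) (piFUnion H t u h).symm)

/-- Dropping the (trivial) `H`-factor over the empty set. -/
def sidxOfQ (Q : P → Type) (H : E → Type) (s : Finset P) :
    PiF Q s ≃ SIdx Q H s (∅ : Finset E) :=
  (Equiv.prodPUnit.{0,0} _).symm.trans (Equiv.prodCongr (Equiv.refl _) (piFEmpty H).symm)


variable {P E : Type} [DecidableEq P] [DecidableEq E]

theorem Net.negs_insert (N : Net P E) (e : E) (s : Finset E) :
    N.negs (insert e s) = N.negPart e ∪ N.negs s := by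
  unfold Net.negs Net.negPart
  rw [Finset.filter_insert]
  by_cases h : N.pol e = Pol.neg
  · rw [if_pos h, if_pos h, Finset.insert_eq]
  · rw [if_neg h, if_neg h, Finset.empty_union]

theorem Net.poss_insert (N : Net P E) (e : E) (s : Finset E) :
    N.poss (insert e s) = N.posPart e ∪ N.poss s := by
  unfold Net.poss Net.posPart
  rw [Finset.filter_insert]
  by_cases h : N.pol e = Pol.pos
  · rw [if_pos h, if_pos h, Finset.insert_eq]
  · rw [if_neg h, if_neg h, Finset.empty_union]

/-- A local quantum annotation of a polarized net: a finite-dimensional Hilbert space `Q a`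
(given by its index type) for every place `a`, a finite-dimensional Hilbert space `H t` for
every transition `t`, and for every transition `t` a CPTNI map
`Q₀(t) : Ops(Q₀(pre t) ⊗ H({t}^⊖)) → Ops(Q₀(post t) ⊗ H({t}^⊕))`. -/
structure Ann (N : Net P E) (Q : P → Type) (H : E → Type)
    [∀ a, Fintype (Q a)] [∀ e, Fintype (H e)] where
  Q0 : (e : E) → MatMap (SIdx Q H (N.pre e) (N.negPart e)) (SIdx Q H (N.post e) (N.posPart e))

variable (Q : P → Type) (H : E → Type) [∀ a, Fintype (Q a)] [∀ e, Fintype (H e)]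
variable {N : Net P E}

/-- All the maps of a local annotation are CPTNI (part of being a local quantum annotation). -/
def AnnCPTNI (A : Ann N Q H) : Prop := ∀ e, IsCPTNI (A.Q0 e)

/-- The action of a single transition `e` fired at marking `m`, tensored with the identity on
the untouched conditions and on the pending `H`-spaces indexed by `t`. -/
def stepMap (A : Ann N Q H) (e : E) (m : Finset P) (t : Finset E) :
    MatMap (SIdx Q H m (N.negPart e ∪ t)) (SIdx Q H (N.fire m e) (N.posPart e ∪ t)) :=
  if h : N.pre e ⊆ m ∧ Disjoint (N.post e) (m \ N.pre e) ∧
      Disjoint (N.negPart e) t ∧ Disjoint (N.posPart e) t then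
    conjMap
      (((sidxSplit Q H (N.pre e) (m \ N.pre e) (N.negPart e) t
          Finset.disjoint_sdiff h.2.2.1).symm).trans
        (Equiv.cast (by rw [Finset.union_sdiff_of_subset h.1])))
      (((sidxSplit Q H (N.post e) (m \ N.pre e) (N.posPart e) t h.2.1 h.2.2.2).symm).trans
        (Equiv.cast (by rw [show N.post e ∪ (m \ N.pre e) = N.fire m e from
          Finset.union_comm _ _])))
      (tensorIdRight (A.Q0 e))
  else 0

/-- The super-operator `𝕆` associated to the firing of the list `L` of transitions from the
marking `m`, carrying the already-produced/not-yet-consumed `H`-spaces indexed by `c` along by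
the identity: the layer-by-layer composite of the maps `Q₀(e)`, `e ∈ L`, padded with
identities. -/
def opSeq (A : Ann N Q H) : (m : Finset P) → (L : List E) → (c : Finset E) →
    MatMap (SIdx Q H m (N.negs L.toFinset ∪ c))
      (SIdx Q H (N.markAfter m L) (N.poss L.toFinset ∪ c))
  | m, [], c => castMap (by simp [Net.negs, Net.poss, Net.markAfter])
  | m, e :: L, c =>
    castMap (by
      rw [show N.poss L.toFinset ∪ (N.posPart e ∪ c) = N.poss (e :: L).toFinset ∪ c by
        rw [List.toFinset_cons, Net.poss_insert, Finset.union_left_comm, Finset.union_assoc]]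
      simp only [Net.markAfter]) ∘ₗ
    opSeq A (N.fire m e) L (N.posPart e ∪ c) ∘ₗ
    castMap (by rw [Finset.union_left_comm]) ∘ₗ
    stepMap Q H A e m (N.negs L.toFinset ∪ c) ∘ₗ
    castMap (by rw [List.toFinset_cons, Net.negs_insert, Finset.union_assoc])

/-- The induced global annotation `Q([m;m']) := 𝕆(O|[m;m'])`, defined on every interval of
markings `m →* m'`; it maps operators on `Q₀(m) ⊗ H(σ[m;m']^⊖)` to operators on
`Q₀(m') ⊗ H(σ[m;m']^⊕)`. -/
def glob (A : Ann N Q H) (m m' : Finset P) :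
    MatMap (SIdx Q H m (N.negs (N.sigma m m'))) (SIdx Q H m' (N.poss (N.sigma m m'))) :=
  if h : ∃ L, N.FireSeq m L m' then
    castMap (by
      rw [N.markAfter_eq h.choose_spec,
        show N.poss h.choose.toFinset ∪ ∅ = N.poss (N.sigma m m') by
          rw [Finset.union_empty]
          simp only [Net.sigma]
          rw [dif_pos h]]) ∘ₗ
    opSeq Q H A m h.choose ∅ ∘ₗ
    castMap (by
      rw [show N.negs (N.sigma m m') = N.negs h.choose.toFinset ∪ ∅ by
        rw [Finset.union_empty]
        simp only [Net.sigma]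
        rw [dif_pos h]])
  else 0

/-- Tensoring a super-operator between `SIdx`-spaces with the identity on the `H`-spaces of a
further finite set `u` of transitions. -/
def extendH {s s' : Finset P} {t t' : Finset E} (u : Finset E)
    (Φ : MatMap (SIdx Q H s t) (SIdx Q H s' t')) (h : Disjoint t u) (h' : Disjoint t' u) :
    MatMap (SIdx Q H s (t ∪ u)) (SIdx Q H s' (t' ∪ u)) :=
  conjMap (sidxAbsorb Q H s t u h) (sidxAbsorb Q H s' t' u h') (tensorIdRight Φ)

/-- The canonical identification of operators on `Q₀(s)` with operators on `Q₀(s) ⊗ H(∅)`. -/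
def padQ (s : Finset P) : MatMap (PiF Q s) (SIdx Q H s (∅ : Finset E)) :=
  conjMap (Equiv.refl _) (sidxOfQ Q H s) LinearMap.id

/-- The functional `tr ∘ 𝕆(O|[m; m'])` on operators on `Q₀(m)`, for a positive/neutral
interval of markings `m →* m'` (and the zero functional otherwise). -/
def dropTerm (A : Ann N Q H) (m m' : Finset P) :
    Matrix (PiF Q m) (PiF Q m) ℂ →ₗ[ℂ] ℂ :=
  if h : N.negs (N.sigma m m') = ∅ then
    trFun (SIdx Q H m' (N.poss (N.sigma m m'))) ∘ₗ glob Q H A m m' ∘ₗ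
      castMap (by rw [h]) ∘ₗ padQ Q H m
  else 0

/-- The drop function `d[x; y₁,…,yₙ]`, a linear functional on operators on `Q₀(x̂)`:
`Σ_{I ⊆ {1,…,n}, y_I ∈ C(E)} (−1)^{|I|} tr ∘ 𝕆(O|[x̂; ŷ_I])`, where `y_I = x ∪ ⋃_{i∈I} yᵢ`. -/
def dropFun (A : Ann N Q H) (x : Finset E) {n : ℕ} (y : Fin n → Finset E) :
    Matrix (PiF Q (N.markingOf x)) (PiF Q (N.markingOf x)) ℂ →ₗ[ℂ] ℂ :=
  ∑ I : Finset (Fin n),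
    if N.IsConfig (x ∪ I.biUnion y) then
      ((-1 : ℂ) ^ I.card) • dropTerm Q H A (N.markingOf x) (N.markingOf (x ∪ I.biUnion y))
    else 0

/-- Local Obliviousness: for every negative event `e`, `Q₀(e)` is the identity map on
operators on `Q₀(pre e) ⊗ H(e)`. -/
def LocalObliviousness (A : Ann N Q H) : Prop :=
  ∀ e : E, N.pol e = Pol.neg →
    HEq (A.Q0 e)
      (LinearMap.id :
        MatMap (SIdx Q H (N.pre e) (N.negPart e)) (SIdx Q H (N.pre e) (N.negPart e)))

/-- Two events lie in the same conflict cluster (connected component of the conflict graph). -/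
def Net.inSameCluster (N : Net P E) (a b : E) : Prop :=
  Relation.ReflTransGen (fun u v => N.conflict u v ∨ N.conflict v u) a b

/-- The Local Drop Condition: `d[x; x∪{e₁},…,x∪{e_k}] ⊒ 0` for every configuration `x` and all
mutually compatible events `e₁,…,e_k` of polarity `0` or `⊕` lying in a single conflict
cluster, each enabled at `x`. -/
def LocalDropCondition (A : Ann N Q H) : Prop :=
  ∀ (x : Finset E) (k : ℕ) (e : Fin k → E),
    N.IsConfig x →
    (∀ i, N.pol (e i) ≠ Pol.neg) →
    (∀ i, N.Enables x (e i)) →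
    (∀ i j, N.inSameCluster (e i) (e j)) →
    (∀ i j, i ≠ j → ¬ N.conflict (e i) (e j)) →
    FunNonneg (dropFun Q H A x fun i => insert (e i) x)

section Transport

variable {P E C F : Type} [DecidableEq P] [DecidableEq E] [DecidableEq C] [DecidableEq F]

/-- The bijection of finset-subtypes induced by a `Set.BijOn`. -/
def bijOnEquiv {g : C → P} {s : Finset C} {t : Finset P} (h : Set.BijOn g ↑s ↑t) : s ≃ t :=
  Equiv.ofBijective (fun a => ⟨g a.1, by exact_mod_cast h.mapsTo (by exact_mod_cast a.2)⟩)
    (by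
      constructor
      · intro a b hab
        exact Subtype.ext (h.injOn (by exact_mod_cast a.2) (by exact_mod_cast b.2)
          (congrArg Subtype.val hab))
      · intro b
        obtain ⟨a, ha, hab⟩ := h.surjOn (by exact_mod_cast b.2)
        exact ⟨⟨a, by exact_mod_cast ha⟩, Subtype.ext hab⟩)

/-- Transport of the tensor index of a space assignment along a bijective relabeling. -/
def piFTransport {g : C → P} (Q : P → Type) {s : Finset C} {t : Finset P}
    (h : Set.BijOn g ↑s ↑t) :
    PiF (fun c => Q (g c)) s ≃ PiF Q t :=
  Equiv.piCongr (bijOnEquiv h) (fun _ => Equiv.cast rfl)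

/-- Matching the `H`-spaces of the polarity part (`{e}^⊖` or `{e}^⊕`) of corresponding
events. -/
def piFPolPart {E₁ E₂ : Type} [DecidableEq E₁] [DecidableEq E₂]
    (H₁ : E₁ → Type) (H₂ : E₂ → Type) (e₁ : E₁) (e₂ : E₂)
    (t₁ : Finset E₁) (t₂ : Finset E₂) (q r : Pol)
    (h₁ : t₁ = if q = r then {e₁} else ∅)
    (h₂ : t₂ = if q = r then {e₂} else ∅)
    (hH : H₁ e₁ = H₂ e₂) :
    PiF H₁ t₁ ≃ PiF H₂ t₂ :=
  if h : q = r then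
    (Equiv.cast (by rw [h₁, if_pos h])).trans
      ((piFSingleton H₁ e₁).trans ((Equiv.cast hH).trans
        ((piFSingleton H₂ e₂).symm.trans (Equiv.cast (by rw [h₂, if_pos h])))))
  else
    (Equiv.cast (by rw [h₁, if_neg h])).trans
      ((piFEmpty H₁).trans ((piFEmpty H₂).symm.trans (Equiv.cast (by rw [h₂, if_neg h]))))

/-- The local annotation induced on a labeled net `O` by transporting an annotation of `N`
along the labeling `(pC, pE)` (each condition and event receiving the annotation of its
label). -/
def transportAnn {N : Net P E} {O : Net C F} (pC : C → P) (pE : F → E)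
    (hpre : ∀ e, Set.BijOn pC ↑(O.pre e) ↑(N.pre (pE e)))
    (hpost : ∀ e, Set.BijOn pC ↑(O.post e) ↑(N.post (pE e)))
    (hpol : ∀ e, O.pol e = N.pol (pE e))
    (Q : P → Type) (H : E → Type) [∀ a, Fintype (Q a)] [∀ e, Fintype (H e)]
    (A : Ann N Q H) : Ann O (fun c => Q (pC c)) (fun e => H (pE e)) where
  Q0 e := conjMap
    (Equiv.prodCongr (piFTransport Q (hpre e)).symm
      (piFPolPart H (fun e' => H (pE e')) (pE e) e (N.negPart (pE e)) (O.negPart e)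
        (N.pol (pE e)) Pol.neg rfl (by simp only [Net.negPart, hpol e]) rfl))
    (Equiv.prodCongr (piFTransport Q (hpost e)).symm
      (piFPolPart H (fun e' => H (pE e')) (pE e) e (N.posPart (pE e)) (O.posPart e)
        (N.pol (pE e)) Pol.pos rfl (by simp only [Net.posPart, hpol e]) rfl))
    (A.Q0 (pE e))

/-- A branching process of a net `N`: an occurrence net `O` with a labeling `(pC, pE)`
preserving the nature of nodes, the environments of transitions, the initial marking and
polarities, and not duplicating transitions. -/
structure IsBranchingProcess (N : Net P E) (O : Net C F) (pC : C → P) (pE : F → E) : Prop where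
  occ : O.IsOccurrenceNet
  pre_bij : ∀ e, Set.BijOn pC ↑(O.pre e) ↑(N.pre (pE e))
  post_bij : ∀ e, Set.BijOn pC ↑(O.post e) ↑(N.post (pE e))
  init_bij : Set.BijOn pC ↑O.init ↑N.init
  pol_eq : ∀ e, O.pol e = N.pol (pE e)
  no_dup : ∀ e₁ e₂, O.pre e₁ = O.pre e₂ → pE e₁ = pE e₂ → e₁ = e₂

/-- The unfolding `𝒰(N)`: the (unique) maximal branching process, into which every other
branching process embeds compatibly with the labelings. -/
structure IsUnfolding (N : Net P E) (O : Net C F) (pC : C → P) (pE : F → E) : Prop where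
  bp : IsBranchingProcess N O pC pE
  maximal : ∀ (C' F' : Type) [DecidableEq C'] [DecidableEq F'] (O' : Net C' F')
      (pC' : C' → P) (pE' : F' → E), IsBranchingProcess N O' pC' pE' →
      ∃ (gC : C' → C) (gE : F' → F),
        Function.Injective gC ∧ Function.Injective gE ∧
        (∀ c, pC (gC c) = pC' c) ∧ (∀ e, pE (gE e) = pE' e) ∧
        (∀ e, (O'.pre e).image gC = O.pre (gE e)) ∧
        (∀ e, (O'.post e).image gC = O.post (gE e)) ∧
        O'.init.image gC = O.init

end Transport

/-- A Local Quantum Occurrence Net: an occurrence net whose local (CPTNI) annotation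
satisfies Local Obliviousness and the Local Drop Condition. -/
def IsLQON {C F : Type} [DecidableEq C] [DecidableEq F] (O : Net C F)
    (Q : C → Type) (H : F → Type) [∀ a, Fintype (Q a)] [∀ e, Fintype (H e)]
    (A : Ann O Q H) : Prop :=
  O.IsOccurrenceNet ∧ AnnCPTNI Q H A ∧ LocalObliviousness Q H A ∧ LocalDropCondition Q H A

/-- A Quantum Petri Net: a (safe) Petri net with polarized transitions and a local annotation
whose transport along the labeling makes its unfolding a Local Quantum Occurrence Net. -/
def IsQuantumPetriNet {P E : Type} [DecidableEq P] [DecidableEq E] (N : Net P E)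
    (Q : P → Type) (H : E → Type) [∀ a, Fintype (Q a)] [∀ e, Fintype (H e)]
    (A : Ann N Q H) : Prop :=
  ∀ (C F : Type) [DecidableEq C] [DecidableEq F] (O : Net C F) (pC : C → P) (pE : F → E)
    (h : IsUnfolding N O pC pE),
    IsLQON O (fun c => Q (pC c)) (fun e => H (pE e))
      (transportAnn pC pE h.bp.pre_bij h.bp.post_bij h.bp.pol_eq Q H A)

section Join

variable {P E : Type} [DecidableEq P] [DecidableEq E]
variable (Q : P → Type) (H : E → Type) [∀ a, Fintype (Q a)] [∀ e, Fintype (H e)]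

/-- The local map of a joined event `p ⋈ n`:
`Q₀(p⋈n) = (Id_{Q₀(post p)} ⊗ Q₀(n)) ∘ (Q₀(p) ⊗ Id_{Q₀(pre n)})`
(equivalently `Q₀(p) ⊗ Id_{Q₀(pre n)}`), using `H(p) = H(n)`; zero in degenerate cases. -/
def joinedQ0 {N : Net P E} (A : Ann N Q H) (p nn : E) :
    MatMap (SIdx Q H (N.pre p ∪ N.pre nn) (∅ : Finset E))
      (SIdx Q H (N.post p ∪ N.post nn) (∅ : Finset E)) :=
  if h : N.pol p = Pol.pos ∧ N.pol nn = Pol.neg ∧ H p = H nn ∧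
      Disjoint (N.pre p) (N.pre nn) ∧ Disjoint (N.post p) (N.post nn) then
    conjMap
      ((Equiv.prodCongr (Equiv.refl (PiF Q (N.post p)))
          (Equiv.prodComm (PiF Q (N.pre nn)) (PiF H ({nn} : Finset E)))).trans
        ((Equiv.prodAssoc _ _ _).symm.trans
          (Equiv.prodCongr
            (Equiv.prodCongr (Equiv.refl _)
              ((piFSingleton H nn).trans ((Equiv.cast h.2.2.1.symm).trans
                (piFSingleton H p).symm)))
            (Equiv.refl _))))
      ((Equiv.prodAssoc _ _ _).symm.trans
        (Equiv.prodCongr (piFUnion Q (N.post p) (N.post nn) h.2.2.2.2).symm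
          (Equiv.refl _)))
      (tensorIdLeft
        (castMap (by rw [show N.posPart nn = (∅ : Finset E) from by
            simp [Net.posPart, h.2.1]]) ∘ₗ
          A.Q0 nn ∘ₗ
          castMap (by rw [show N.negPart nn = ({nn} : Finset E) from by
            simp [Net.negPart, h.2.1]]))) ∘ₗ
    conjMap
      ((Equiv.prodAssoc _ _ _).trans
        ((Equiv.prodCongr (Equiv.refl (PiF Q (N.pre p)))
            (Equiv.prodComm (PiF H (∅ : Finset E)) (PiF Q (N.pre nn)))).trans
          ((Equiv.prodAssoc _ _ _).symm.trans
            (Equiv.prodCongr (piFUnion Q (N.pre p) (N.pre nn) h.2.2.2.1).symm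
              (Equiv.refl _)))))
      (Equiv.refl _)
      (tensorIdRight
        (castMap (by rw [show N.posPart p = ({p} : Finset E) from by
            simp [Net.posPart, h.1]]) ∘ₗ
          A.Q0 p ∘ₗ
          castMap (by rw [show N.negPart p = (∅ : Finset E) from by
            simp [Net.negPart, h.1]])))
  else 0

/-- The events of the net obtained by joining away the negative events in `Nn`. -/
abbrev JoinE (Nn : Finset E) : Type := {e : E // e ∉ Nn}

/-- The net obtained from `N` by simultaneously joining each negative event `n ∈ Nn` with the
positive event `f(n) ∈ Pp`: each `p = f(n) ∈ Pp` becomes the neutral joined event `p ⋈ n` with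
`pre(p⋈n) = pre(p) ∪ pre(n)` and `post(p⋈n) = post(p) ∪ post(n)`; everything else is
unchanged.  (For a single join `S_{p⋈n}` take `Nn = {n}`, `Pp = {p}`, `f = fun _ => p`.) -/
def joinNet (N : Net P E) (Nn Pp : Finset E) (f : E → E) : Net P (JoinE Nn) where
  pre e :=
    haveI : Nonempty E := ⟨e.1⟩
    if e.1 ∈ Pp then N.pre e.1 ∪ N.pre (Function.invFunOn f ↑Nn e.1) else N.pre e.1
  post e :=
    haveI : Nonempty E := ⟨e.1⟩
    if e.1 ∈ Pp then N.post e.1 ∪ N.post (Function.invFunOn f ↑Nn e.1) else N.post e.1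
  init := N.init
  pol e := if e.1 ∈ Pp then Pol.zero else N.pol e.1

/-- The local annotation of the joined net: joined events receive
`Q₀(p) ⊗ Id_{Q₀(pre n)}`, all other events keep their annotation. -/
def joinAnn {N : Net P E} (A : Ann N Q H) (Nn Pp : Finset E) (f : E → E) :
    Ann (joinNet N Nn Pp f) Q (fun e => H e.1) where
  Q0 e :=
    haveI : Nonempty E := ⟨e.1⟩
    if h : e.1 ∈ Pp then
      conjMap
        (Equiv.prodCongr
          (Equiv.cast (by
            rw [show (joinNet N Nn Pp f).pre e =
              N.pre e.1 ∪ N.pre (Function.invFunOn f ↑Nn e.1) from by simp [joinNet, h]]))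
          ((piFEmpty H).trans ((piFEmpty (fun e' : JoinE Nn => H e'.1)).symm.trans
            (Equiv.cast (by
              rw [show (joinNet N Nn Pp f).negPart e = ∅ from by
                simp [Net.negPart, joinNet, h]])))))
        (Equiv.prodCongr
          (Equiv.cast (by
            rw [show (joinNet N Nn Pp f).post e =
              N.post e.1 ∪ N.post (Function.invFunOn f ↑Nn e.1) from by simp [joinNet, h]]))
          ((piFEmpty H).trans ((piFEmpty (fun e' : JoinE Nn => H e'.1)).symm.trans
            (Equiv.cast (by
              rw [show (joinNet N Nn Pp f).posPart e = ∅ from by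
                simp [Net.posPart, joinNet, h]])))))
        (joinedQ0 Q H A e.1 (Function.invFunOn f ↑Nn e.1))
    else
      conjMap
        (Equiv.prodCongr
          (Equiv.cast (by
            rw [show (joinNet N Nn Pp f).pre e = N.pre e.1 from by simp [joinNet, h]]))
          (piFPolPart H (fun e' : JoinE Nn => H e'.1) e.1 e (N.negPart e.1)
            ((joinNet N Nn Pp f).negPart e) (N.pol e.1) Pol.neg rfl
            (by simp [Net.negPart, joinNet, h]) rfl))
        (Equiv.prodCongr
          (Equiv.cast (by
            rw [show (joinNet N Nn Pp f).post e = N.post e.1 from by simp [joinNet, h]]))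
          (piFPolPart H (fun e' : JoinE Nn => H e'.1) e.1 e (N.posPart e.1)
            ((joinNet N Nn Pp f).posPart e) (N.pol e.1) Pol.pos rfl
            (by simp [Net.posPart, joinNet, h]) rfl))
        (A.Q0 e.1)

/-- A conflict cluster: a (nonempty) connected component of the conflict graph. -/
def IsConflictCluster (N : Net P E) (Cl : Finset E) : Prop :=
  Cl.Nonempty ∧ (∀ a ∈ Cl, ∀ b ∈ Cl, N.inSameCluster a b) ∧
    (∀ a ∈ Cl, ∀ b, N.inSameCluster a b → b ∈ Cl)

/-- A drop-preserving join: a maximal negative conflict cluster `Nn`, a strictly positive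
cluster `Pp`, and a bijection `f : Nn → Pp` preserving minimal conflicts, with
`H(f(e)) = H(e)` for every `e ∈ Nn`. -/
structure IsDropPreservingJoin (N : Net P E) (H : E → Type) (Nn Pp : Finset E)
    (f : E → E) : Prop where
  neg_cluster : IsConflictCluster N Nn
  neg_pol : ∀ a ∈ Nn, N.pol a = Pol.neg
  pos_pol : ∀ a ∈ Pp, N.pol a = Pol.pos
  pos_connected : ∀ a ∈ Pp, ∀ b ∈ Pp, N.inSameCluster a b
  bij : Set.BijOn f ↑Nn ↑Pp
  conf_preserved : ∀ a ∈ Nn, ∀ b ∈ Nn, N.minConflict a b → N.minConflict (f a) (f b)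
  hspaces : ∀ a ∈ Nn, H (f a) = H a

end Join

/-! A minimal conflict `a ~ b` of the joined net is immediate. If `a` is negative it is not a
joined event and lies outside the conflict-closed cluster `Nn`, so the shared pre-place is not
one inherited from some `n ∈ Nn`: `a`, `b` are in conflict in `N`. Sending `n ∈ Nn` to `f n ⋈ n`
preserves causality and conflicts, so a smaller conflict in `N` would give a smaller one in the
joined net; hence `a ~ b` in `N`, and race-freeness of `N` makes `b` negative, hence not joined. -/

section Conflict

variable {N : Net P E} {a b : E}

theorem Net.conflict.symm (h : N.conflict a b) : N.conflict b a := by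
  obtain ⟨e, e', hne, hcap, hea, heb⟩ := h
  exact ⟨e', e, hne.symm, Finset.inter_comm (N.pre e) _ ▸ hcap, heb, hea⟩

theorem Net.minConflict.symm (h : N.minConflict a b) : N.minConflict b a :=
  ⟨h.1.symm, fun b' hb hne hc => h.2.2 b' hb hne hc.symm,
    fun a' ha hne hc => h.2.1 a' ha hne hc.symm⟩

theorem Net.conflict_of_inter_pre_nonempty (hne : a ≠ b) (h : (N.pre a ∩ N.pre b).Nonempty) :
    N.conflict a b :=
  ⟨a, b, hne, h, .refl, .refl⟩

-- By minimality, the events witnessing the conflict are `a` and `b` themselves.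
theorem Net.minConflict.ne_and_inter_pre_nonempty (h : N.minConflict a b) :
    a ≠ b ∧ (N.pre a ∩ N.pre b).Nonempty := by
  obtain ⟨⟨e, e', hne, hcap, hea, heb⟩, hmin_left, hmin_right⟩ := h
  obtain rfl : e = a := by
    by_contra hx
    exact hmin_left e hea hx ⟨e, e', hne, hcap, .refl, heb⟩
  obtain rfl : e' = b := by
    by_contra hx
    exact hmin_right e' heb hx ⟨e, e', hne, hcap, .refl, .refl⟩
  exact ⟨hne, hcap⟩

theorem IsConflictCluster.mem_of_conflict {Cl : Finset E} (h : IsConflictCluster N Cl)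
    (ha : a ∈ Cl) (hab : N.conflict a b) : b ∈ Cl :=
  h.2.2 a ha b (.single (Or.inl hab))

end Conflict

section JoinLift

variable {N : Net P E} {Nn Pp : Finset E} {f : E → E}

theorem joinNet_pol_eq_neg_iff (e : JoinE Nn) :
    (joinNet N Nn Pp f).pol e = Pol.neg ↔ e.1 ∉ Pp ∧ N.pol e.1 = Pol.neg := by
  by_cases h : e.1 ∈ Pp <;> simp [joinNet, h]

theorem joinNet_pre_of_not_mem {e : JoinE Nn} (h : e.1 ∉ Pp) :
    (joinNet N Nn Pp f).pre e = N.pre e.1 := by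
  simp [joinNet, h]

theorem mem_joinNet_pre (hsurj : Set.SurjOn f Nn Pp) {e : JoinE Nn} {c : P}
    (hc : c ∈ (joinNet N Nn Pp f).pre e) : c ∈ N.pre e.1 ∨ ∃ n ∈ Nn, c ∈ N.pre n := by
  have : Nonempty E := ⟨e.1⟩
  by_cases h : e.1 ∈ Pp
  · simp only [joinNet, if_pos h, Finset.mem_union] at hc
    exact hc.imp_right fun hc => ⟨_, Function.invFunOn_mem (hsurj h), hc⟩
  · rw [joinNet_pre_of_not_mem h] at hc
    exact Or.inl hc

variable (hmaps : Set.MapsTo f Nn Pp) (hdisj : Disjoint Nn Pp)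

/-- An event `n ∈ Nn` is sent to `f n ⋈ n`, every other event to itself. -/
def joinLift (u : E) : JoinE Nn :=
  if h : u ∈ Nn then ⟨f u, Finset.disjoint_right.1 hdisj (hmaps h)⟩ else ⟨u, h⟩

theorem joinLift_of_mem {u : E} (h : u ∈ Nn) : (joinLift hmaps hdisj u).1 = f u := by
  simp [joinLift, h]

theorem joinLift_of_not_mem {u : E} (h : u ∉ Nn) : joinLift hmaps hdisj u = ⟨u, h⟩ := by
  simp [joinLift, h]

theorem joinLift_val (v : JoinE Nn) : joinLift hmaps hdisj v.1 = v :=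
  joinLift_of_not_mem hmaps hdisj v.2

theorem pre_subset_joinNet_pre_joinLift (hinj : Set.InjOn f Nn) (u : E) :
    N.pre u ⊆ (joinNet N Nn Pp f).pre (joinLift hmaps hdisj u) := by
  have : Nonempty E := ⟨u⟩
  by_cases h : u ∈ Nn
  · rw [joinLift, dif_pos h]
    show N.pre u ⊆ if f u ∈ Pp then N.pre (f u) ∪ N.pre (Function.invFunOn f Nn (f u)) else _
    rw [if_pos (Finset.mem_coe.1 (hmaps h)), hinj.leftInvOn_invFunOn h]
    exact Finset.subset_union_right
  · rw [joinLift, dif_neg h]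
    show N.pre u ⊆ if u ∈ Pp then N.pre u ∪ _ else N.pre u
    split_ifs
    · exact Finset.subset_union_left
    · exact subset_rfl

theorem post_subset_joinNet_post_joinLift (hinj : Set.InjOn f Nn) (u : E) :
    N.post u ⊆ (joinNet N Nn Pp f).post (joinLift hmaps hdisj u) := by
  have : Nonempty E := ⟨u⟩
  by_cases h : u ∈ Nn
  · rw [joinLift, dif_pos h]
    show N.post u ⊆ if f u ∈ Pp then N.post (f u) ∪ N.post (Function.invFunOn f Nn (f u)) else _
    rw [if_pos (Finset.mem_coe.1 (hmaps h)), hinj.leftInvOn_invFunOn h]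
    exact Finset.subset_union_right
  · rw [joinLift, dif_neg h]
    show N.post u ⊆ if u ∈ Pp then N.post u ∪ _ else N.post u
    split_ifs
    · exact Finset.subset_union_left
    · exact subset_rfl

theorem causes_joinLift (hinj : Set.InjOn f Nn) {u v : E} (h : N.causes u v) :
    (joinNet N Nn Pp f).causes (joinLift hmaps hdisj u) (joinLift hmaps hdisj v) := by
  refine Relation.ReflTransGen.lift _ (fun x y ⟨c, hc⟩ => ?_) u v h
  rw [Finset.mem_inter] at hc
  exact ⟨c, Finset.mem_inter.2 ⟨post_subset_joinNet_post_joinLift hmaps hdisj hinj x hc.1,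
    pre_subset_joinNet_pre_joinLift hmaps hdisj hinj y hc.2⟩⟩

-- Only `n` and `f n` have the same lift, and they cannot share a pre-place: `f n` would then
-- lie in the conflict-closed set `Nn`.
theorem joinLift_ne_joinLift (hinj : Set.InjOn f Nn)
    (hclosed : ∀ n ∈ Nn, ∀ u, N.conflict n u → u ∈ Nn) {u v : E} (hne : u ≠ v)
    (huv : (N.pre u ∩ N.pre v).Nonempty) : joinLift hmaps hdisj u ≠ joinLift hmaps hdisj v := by
  have hc : N.conflict u v := N.conflict_of_inter_pre_nonempty hne huv
  by_cases hu : u ∈ Nn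
  · have hv : v ∈ Nn := hclosed u hu v hc
    intro heq
    apply hne (hinj hu hv _)
    rw [← joinLift_of_mem hmaps hdisj hu, ← joinLift_of_mem hmaps hdisj hv, heq]
  · have hv : v ∉ Nn := fun hv => hu (hclosed v hv u hc.symm)
    rw [joinLift_of_not_mem hmaps hdisj hu, joinLift_of_not_mem hmaps hdisj hv]
    exact fun heq => hne (congrArg Subtype.val heq)

theorem conflict_joinLift (hinj : Set.InjOn f Nn)
    (hclosed : ∀ n ∈ Nn, ∀ u, N.conflict n u → u ∈ Nn) {x y : E} (h : N.conflict x y) :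
    (joinNet N Nn Pp f).conflict (joinLift hmaps hdisj x) (joinLift hmaps hdisj y) := by
  obtain ⟨e, e', hne, ⟨c, hc⟩, hex, hey⟩ := h
  rw [Finset.mem_inter] at hc
  exact ⟨_, _, joinLift_ne_joinLift hmaps hdisj hinj hclosed hne ⟨c, Finset.mem_inter.2 hc⟩,
    ⟨c, Finset.mem_inter.2 ⟨pre_subset_joinNet_pre_joinLift hmaps hdisj hinj e hc.1,
      pre_subset_joinNet_pre_joinLift hmaps hdisj hinj e' hc.2⟩⟩,
    causes_joinLift hmaps hdisj hinj hex, causes_joinLift hmaps hdisj hinj hey⟩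

theorem minConflict_of_joinNet_minConflict (hmaps : Set.MapsTo f Nn Pp)
    (hdisj : Disjoint Nn Pp) (hinj : Set.InjOn f Nn) (hsurj : Set.SurjOn f Nn Pp)
    (hclosed : ∀ n ∈ Nn, ∀ u, N.conflict n u → u ∈ Nn) {a b : JoinE Nn} (ha : a.1 ∉ Pp)
    (hab : (joinNet N Nn Pp f).minConflict a b) : N.minConflict a.1 b.1 := by
  have not_mem_of_conflict : ∀ {u}, N.conflict a.1 u → u ∉ Nn :=
    fun hu hn => a.2 (hclosed _ hn _ hu.symm)
  obtain ⟨hne, c, hc⟩ := hab.ne_and_inter_pre_nonempty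
  rw [Finset.mem_inter, joinNet_pre_of_not_mem ha] at hc
  have hcb : c ∈ N.pre b.1 := (mem_joinNet_pre hsurj hc.2).resolve_right
    fun ⟨n, hn, hcn⟩ => not_mem_of_conflict (N.conflict_of_inter_pre_nonempty
      (fun h => a.2 (h ▸ hn)) ⟨c, Finset.mem_inter.2 ⟨hc.1, hcn⟩⟩) hn
  refine ⟨N.conflict_of_inter_pre_nonempty (Subtype.val_injective.ne hne)
    ⟨c, Finset.mem_inter.2 ⟨hc.1, hcb⟩⟩, fun a' ha'a hne' ha'b => ?_,
    fun b' hb'b hne' hab' => ?_⟩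
  · refine hab.2.1 (joinLift hmaps hdisj a')
      (joinLift_val hmaps hdisj a ▸ causes_joinLift hmaps hdisj hinj ha'a) (fun heq => ?_)
      (joinLift_val hmaps hdisj b ▸ conflict_joinLift hmaps hdisj hinj hclosed ha'b)
    by_cases h : a' ∈ Nn
    · exact ha (heq ▸ joinLift_of_mem hmaps hdisj h ▸ hmaps h)
    · exact hne' (congrArg Subtype.val (joinLift_of_not_mem hmaps hdisj h ▸ heq))
  · have hb' := not_mem_of_conflict hab'
    refine hab.2.2 (joinLift hmaps hdisj b')
      (joinLift_val hmaps hdisj b ▸ causes_joinLift hmaps hdisj hinj hb'b) (fun heq => ?_)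
      (joinLift_val hmaps hdisj a ▸ conflict_joinLift hmaps hdisj hinj hclosed hab')
    exact hne' (congrArg Subtype.val (joinLift_of_not_mem hmaps hdisj hb' ▸ heq))

end JoinLift

theorem IsDropPreservingJoin.disjoint {N : Net P E} {H : E → Type} {Nn Pp : Finset E}
    {f : E → E} (h : IsDropPreservingJoin N H Nn Pp f) : Disjoint Nn Pp :=
  Finset.disjoint_left.2 fun e hn hp => by simpa [h.neg_pol e hn] using h.pos_pol e hp

theorem drop_preserving_join_preserves_race_freeness_general
    {P E : Type} [DecidableEq P] [DecidableEq E]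
    (N : Net P E)
    (H : E → Type)
    (Nn Pp : Finset E) (f : E → E)
    (hdpj : IsDropPreservingJoin N H Nn Pp f)
    (hrf : N.RaceFree) :
    (joinNet N Nn Pp f).RaceFree := by
  have neg_of_neg : ∀ a b, (joinNet N Nn Pp f).minConflict a b →
      (joinNet N Nn Pp f).pol a = Pol.neg → (joinNet N Nn Pp f).pol b = Pol.neg := by
    intro a b hab ha
    rw [joinNet_pol_eq_neg_iff] at ha ⊢
    have hmin : N.minConflict a.1 b.1 :=
      minConflict_of_joinNet_minConflict hdpj.bij.mapsTo hdpj.disjoint hdpj.bij.injOn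
        hdpj.bij.surjOn (fun _ hn _ => hdpj.neg_cluster.mem_of_conflict hn) ha.1 hab
    have hb : N.pol b.1 = Pol.neg := (hrf _ _ hmin).1 ha.2
    exact ⟨fun hp => by simpa [hb] using hdpj.pos_pol _ hp, hb⟩
  exact fun a b hab => ⟨neg_of_neg a b hab, neg_of_neg b a hab.symm⟩

/-- Let `S` be a race-free occurrence net with polarized events and let
`S' = S ⋈_f` be obtained from `S` by a drop-preserving join determined by a maximal negative
conflict cluster `N`, a strictly positive cluster `P` and a bijection `f : N → P`.  Then `S'`
is race-free. -/
theorem drop_preserving_join_preserves_race_freeness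
    {P E : Type} [DecidableEq P] [DecidableEq E]
    (N : Net P E) (hocc : N.IsOccurrenceNet)
    (H : E → Type)
    (Nn Pp : Finset E) (f : E → E)
    (hdpj : IsDropPreservingJoin N H Nn Pp f)
    (hrf : N.RaceFree) :
    (joinNet N Nn Pp f).RaceFree :=
  drop_preserving_join_preserves_race_freeness_general N H Nn Pp f hdpj hrf

end QPN
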